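/- Let p, q be coprime integers with q ≥ 1 and let n ∈ {0,…,q−1}. Then the generalized quadratic Gauss sum G(−p,n,q) vanishes if and only if 4 divides 2n + 2 − q. In particular, for q odd, G(−p,n,q) ≠ 0 for every n. -/

import Mathlib

/-!
Over `ZMod q` the sum is `G = ∑ₓ ψ (a x² + b x)` with `ψ` the standard additive character,
`a = -p` and `b = n`. Expanding `G · conj G` and substituting `x = y + m` leaves, for each `m`,
a complete character sum in `y` that vanishes unless `2 a m = 0`; hence
`|G|² = q ∑_{2am = 0} ψ (a m² + b m)`. Since `p` is a unit mod `q`, the condition reads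
`2 m = 0`.
For odd `q` only `m = 0` survives and `|G|² = q`. For `q = 2 r` the solutions are `m ∈ {0, r}`
and `|G|² = q (1 + (-1) ^ (n - p r))`; as `p` is then odd, this vanishes iff `n - r` is odd,
i.e. iff `4 ∣ 2 n + 2 - q`.
-/

/-- The generalized quadratic Gauss sum `G(-p, n, q) = ∑_{k=0}^{q-1} e(( -p k² + n k)/q)`. -/
noncomputable def Gm (p : ℤ) (q : ℕ) (n : ℤ) : ℂ :=
  ∑ k ∈ Finset.range q,
    Complex.exp (2 * Real.pi * Complex.I *
      ((-(p : ℂ) * (k : ℂ) ^ 2 + (n : ℂ) * (k : ℂ)) / (q : ℂ)))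

open Finset ComplexConjugate

section
variable {R K : Type*} [CommRing R] [Fintype R] [RCLike K]

noncomputable def quadraticGaussSum (ψ : AddChar R K) (a b : R) : K :=
  ∑ x, ψ (a * x ^ 2 + b * x)

variable [DecidableEq R] {ψ : AddChar R K}

theorem quadraticGaussSum_mul_conj (hψ : ψ.IsPrimitive) (a b : R) :
    quadraticGaussSum ψ a b * conj (quadraticGaussSum ψ a b) =
      Fintype.card R * ∑ m ∈ univ.filter (fun m => 2 * a * m = 0), ψ (a * m ^ 2 + b * m) := by
  set f : R → R := fun x => a * x ^ 2 + b * x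
  have hshift : ∀ y m, f (y + m) - f y = f m + y * (2 * a * m) := fun y m => by
    simp only [f]; ring
  calc quadraticGaussSum ψ a b * conj (quadraticGaussSum ψ a b)
      = ∑ y, ∑ x, ψ (f x - f y) := by
        simp only [quadraticGaussSum, map_sum, ← AddChar.map_neg_eq_conj, sum_mul_sum,
          ← AddChar.map_add_eq_mul, sub_eq_add_neg, f]
        exact sum_comm
    _ = ∑ y, ∑ m, ψ (f (y + m) - f y) := by
        refine sum_congr rfl fun y _ => ?_
        exact (Fintype.sum_equiv (Equiv.addLeft y) _ _ fun m => rfl).symm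
    _ = ∑ m, ψ (f m) * ∑ y, ψ (y * (2 * a * m)) := by
        simp only [hshift, AddChar.map_add_eq_mul, mul_sum]
        exact sum_comm
    _ = _ := by
        simp only [AddChar.sum_mulShift _ hψ, Nat.cast_ite, Nat.cast_zero, mul_ite, mul_zero,
          sum_filter, mul_sum]
        refine sum_congr rfl fun m _ => ?_
        split_ifs
        exacts [mul_comm _ _, rfl]

theorem quadraticGaussSum_eq_zero_iff (hψ : ψ.IsPrimitive) (a b : R) :
    quadraticGaussSum ψ a b = 0 ↔
      ∑ m ∈ univ.filter (fun m => 2 * a * m = 0), ψ (a * m ^ 2 + b * m) = 0 := by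
  have hcard : (Fintype.card R : K) ≠ 0 := Nat.cast_ne_zero.2 Fintype.card_ne_zero
  calc quadraticGaussSum ψ a b = 0
      ↔ quadraticGaussSum ψ a b * conj (quadraticGaussSum ψ a b) = 0 := by
        rw [RCLike.mul_conj]; simp
    _ ↔ _ := by rw [quadraticGaussSum_mul_conj hψ, mul_eq_zero, or_iff_right hcard]
end

theorem ZMod.sum_eq_sum_range {M : Type*} [AddCommMonoid M] (q : ℕ) [NeZero q]
    (g : ZMod q → M) :
    ∑ x, g x = ∑ k ∈ range q, g k := by
  obtain ⟨k, rfl⟩ := Nat.exists_eq_succ_of_ne_zero (NeZero.ne q)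
  rw [← Fin.sum_univ_eq_sum_range]
  exact sum_congr rfl fun x _ => congrArg g (ZMod.natCast_zmod_val x).symm

theorem Gm_eq_quadraticGaussSum (p : ℤ) (q : ℕ) [NeZero q] (n : ℤ) :
    Gm p q n = quadraticGaussSum ZMod.stdAddChar (-(p : ZMod q)) n := by
  rw [quadraticGaussSum, ZMod.sum_eq_sum_range, Gm]
  refine sum_congr rfl fun k _ => ?_
  have := ZMod.stdAddChar_coe (N := q) (-p * k ^ 2 + n * k)
  push_cast at this
  rw [this, mul_div_assoc]

theorem ZMod.isUnit_intCast_of_gcd_eq_one {p : ℤ} {q : ℕ} (h : Int.gcd p q = 1) :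
    IsUnit (p : ZMod q) := by
  have := (Int.isCoprime_iff_gcd_eq_one.2 h).map (Int.castRingHom (ZMod q))
  simpa using isCoprime_zero_right.mp (by simpa using this)

theorem ZMod.two_mul_eq_zero_iff {r : ℕ} [NeZero r] (m : ZMod (2 * r)) :
    2 * m = 0 ↔ m = 0 ∨ m = r := by
  constructor
  · intro h
    have h2 : 2 * r ∣ 2 * m.val := by
      rw [← ZMod.natCast_eq_zero_iff]; push_cast; simpa using h
    obtain ⟨t, ht⟩ := Nat.dvd_of_mul_dvd_mul_left two_pos h2
    have hlt := m.val_lt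
    have ht2 : t < 2 := by nlinarith [NeZero.pos r]
    interval_cases t
    · left; rw [← ZMod.val_eq_zero]; simpa using ht
    · right; rw [← ZMod.natCast_zmod_val m, ht, mul_one]
  · rintro (rfl | rfl)
    · exact mul_zero 2
    · exact_mod_cast ZMod.natCast_self (2 * r)

theorem ZMod.stdAddChar_natCast_half (r : ℕ) [NeZero r] :
    ZMod.stdAddChar (r : ZMod (2 * r)) = -1 := by
  have := ZMod.stdAddChar_coe (N := 2 * r) r
  push_cast at this
  rw [this, show 2 * Real.pi * Complex.I * r / (2 * r) = Real.pi * Complex.I by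
    field_simp [Nat.cast_ne_zero.2 (NeZero.ne r)]]
  exact Complex.exp_pi_mul_I

theorem Gm_ne_zero_of_odd {p : ℤ} {q : ℕ} (hpq : Int.gcd p q = 1) (hq : Odd q) (n : ℤ) :
    Gm p q n ≠ 0 := by
  have : NeZero q := ⟨hq.pos.ne'⟩
  have h2 : IsUnit (2 : ZMod q) := by
    exact_mod_cast (ZMod.isUnit_iff_coprime 2 q).2 (Nat.coprime_two_left.2 hq)
  have hunit : IsUnit (2 * -(p : ZMod q)) := h2.mul (ZMod.isUnit_intCast_of_gcd_eq_one hpq).neg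
  have hker : univ.filter (fun m : ZMod q => 2 * -(p : ZMod q) * m = 0) = {0} := by
    ext m
    rw [mem_filter, mem_singleton, hunit.mul_right_eq_zero, and_iff_right (mem_univ m)]
  rw [Gm_eq_quadraticGaussSum, Ne, quadraticGaussSum_eq_zero_iff (ZMod.isPrimitive_stdAddChar q),
    hker]
  simp

theorem Gm_two_mul_eq_zero_iff {p : ℤ} {r : ℕ} [NeZero r] (hpr : Int.gcd p (2 * r : ℕ) = 1)
    (n : ℤ) : Gm p (2 * r) n = 0 ↔ Odd (n - p * r) := by
  have hunit := (ZMod.isUnit_intCast_of_gcd_eq_one hpr).neg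
  have hr : (r : ZMod (2 * r)) ≠ 0 := fun h =>
    NeZero.ne r <| Nat.eq_zero_of_dvd_of_lt ((ZMod.natCast_eq_zero_iff _ _).1 h)
      (by linarith [NeZero.pos r])
  have hker : univ.filter (fun m : ZMod (2 * r) => 2 * -(p : ZMod (2 * r)) * m = 0) =
      {0, (r : ZMod (2 * r))} := by
    ext m
    rw [mem_filter, mem_insert, mem_singleton, mul_right_comm, hunit.mul_left_eq_zero,
      ZMod.two_mul_eq_zero_iff, and_iff_right (mem_univ m)]
  have hval : -(p : ZMod (2 * r)) * r ^ 2 + n * r = (n - p * r : ℤ) • (r : ZMod (2 * r)) := by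
    rw [zsmul_eq_mul]; push_cast; ring
  rw [Gm_eq_quadraticGaussSum, quadraticGaussSum_eq_zero_iff (ZMod.isPrimitive_stdAddChar _),
    hker, sum_pair hr.symm, hval, AddChar.map_zsmul_eq_zpow, ZMod.stdAddChar_natCast_half]
  rcases Int.even_or_odd (n - p * r) with h | h
  · simp [h.neg_one_zpow, Int.not_odd_iff_even.2 h]
  · simp [h.neg_one_zpow, h]

theorem Int.odd_of_gcd_eq_one_of_even {p : ℤ} {q : ℕ} (h : Int.gcd p q = 1) (hq : Even q) :
    Odd p := by
  rw [← Int.not_even_iff_odd]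
  intro hp
  have hq2 : (2 : ℤ) ∣ q := by exact_mod_cast even_iff_two_dvd.1 hq
  have := Int.dvd_coe_gcd (even_iff_two_dvd.1 hp) hq2
  rw [h] at this
  norm_num at this

theorem Int.odd_sub_mul_iff_four_dvd {p n r : ℤ} (hp : Odd p) :
    Odd (n - p * r) ↔ 4 ∣ 2 * n + 2 - 2 * r := by
  obtain ⟨a, rfl⟩ := hp
  rw [show n - (2 * a + 1) * r = n - r - 2 * (a * r) by ring, Int.odd_iff]
  omega

theorem Gm_eq_zero_iff {p : ℤ} {q : ℕ} (hq : 1 ≤ q) (hpq : Int.gcd p q = 1) (n : ℤ) :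
    Gm p q n = 0 ↔ 4 ∣ 2 * n + 2 - q := by
  obtain ⟨r, rfl | rfl⟩ := Nat.even_or_odd' q
  · have : NeZero r := ⟨by omega⟩
    rw [Gm_two_mul_eq_zero_iff hpq,
      Int.odd_sub_mul_iff_four_dvd (Int.odd_of_gcd_eq_one_of_even hpq (even_two_mul r))]
    push_cast
    rfl
  · exact iff_of_false (Gm_ne_zero_of_odd hpq (odd_two_mul_add_one r) n) (by omega)

theorem stmt8_general (p : ℤ) (q : ℕ) (hq : 1 ≤ q) (hpq : Int.gcd p (q : ℤ) = 1)
    (n : ℕ) :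
    (Gm p q (n : ℤ) = 0 ↔ (4 : ℤ) ∣ (2 * (n : ℤ) + 2 - (q : ℤ))) ∧
    (Odd q → ∀ m : ℕ, m < q → Gm p q (m : ℤ) ≠ 0) :=
  ⟨Gm_eq_zero_iff hq hpq n, fun hodd m _ => Gm_ne_zero_of_odd hpq hodd m⟩

theorem stmt8 (p : ℤ) (q : ℕ) (hq : 1 ≤ q) (hpq : Int.gcd p (q : ℤ) = 1)
    (n : ℕ) (hn : n < q) :
    (Gm p q (n : ℤ) = 0 ↔ (4 : ℤ) ∣ (2 * (n : ℤ) + 2 - (q : ℤ))) ∧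
    (Odd q → ∀ m : ℕ, m < q → Gm p q (m : ℤ) ≠ 0) :=
  stmt8_general p q hq hpq n
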